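/- Let a, b, c be real numbers with a, b > 0, Δ = sqrt((1-c)²+4ab), and suppose b ≠ a² and (Δ + (1-c)) = 2a(ac - b²)/(b - a²). Then (a³ - b³ - ab(1-c))·(ab - c) = 0. -/
import Mathlib

theorem stmt_4 (a b c : ℝ) (ha : 0 < a) (hb : 0 < b)
    (hba : b ≠ a ^ 2)
    (h : Real.sqrt ((1 - c) ^ 2 + 4 * a * b) + (1 - c) =
      2 * a * (a * c - b ^ 2) / (b - a ^ 2)) :
    (a ^ 3 - b ^ 3 - a * b * (1 - c)) * (a * b - c) = 0 := by
  have hD : b - a ^ 2 ≠ 0 := sub_ne_zero.mpr hba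
  have hnn : (0:ℝ) ≤ (1 - c) ^ 2 + 4 * a * b := by positivity
  have hs : Real.sqrt ((1 - c) ^ 2 + 4 * a * b) ^ 2 = (1 - c) ^ 2 + 4 * a * b :=
    Real.sq_sqrt hnn
  have h2 : Real.sqrt ((1 - c) ^ 2 + 4 * a * b) * (b - a ^ 2) =
      2 * a * (a * c - b ^ 2) - (1 - c) * (b - a ^ 2) := by
    have := h
    field_simp at this
    linarith [this]
  have h3 : (2 * a * (a * c - b ^ 2) - (1 - c) * (b - a ^ 2)) ^ 2 =
      ((1 - c) ^ 2 + 4 * a * b) * (b - a ^ 2) ^ 2 := by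
    rw [← h2]; rw [mul_pow, hs]
  have h4 : (4 * a) * ((a ^ 3 - b ^ 3 - a * b * (1 - c)) * (a * b - c)) = (4 * a) * 0 := by
    linear_combination (-1:ℝ) * h3
  exact mul_left_cancel₀ (by positivity) h4
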